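/- arXiv:2205.04867 — 2 statements merged into one kernel-verified Lean document; each statement's English description precedes it below -/
import Mathlib

section
/- Let 0 < q < 1, let λ be a nonzero real number, and let m, ν be real numbers with ν > −1 and m + ν > 0. Then for all x > 0, the q-derivative at x of the function G(x) := ( x^{m+1} / (−x²λ²(1−q)²; q²)_∞ )·( ((q^{−m}[m]_q − q^{−ν}[ν]_q)/x)·J_ν^{(2)}(λx | q²) + q^ν·λ·J_{ν+1}^{(2)}(λx | q²) ) equals ( x^{m+1} / (−x²λ²(1−q)²; q²)_∞ )·( q^m·λ² + ( q^{−m}[m]_q² − q^{−ν}[ν]_q² )/x² )·J_ν^{(2)}(λx | q²). -/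
/-- The Jackson `q`-derivative `(D_q f)(x) = (f(x) - f(qx)) / ((1-q)x)`. -/
noncomputable def qDeriv (q : ℝ) (f : ℝ → ℝ) (x : ℝ) : ℝ :=
  (f x - f (q * x)) / ((1 - q) * x)

/-- The finite q-shifted factorial `(z; q)_n`. -/
noncomputable def qPoch (z q : ℝ) (n : ℕ) : ℝ :=
  ∏ k ∈ Finset.range n, (1 - z * q ^ k)

/-- The infinite q-shifted factorial `(z; q)_∞`. -/
noncomputable def qPochInf (z q : ℝ) : ℝ :=
  ∏' k : ℕ, (1 - z * q ^ k)

/-- The q-bracket `[ν]_q = (1 - q^ν)/(1 - q)` for a real `ν` (rpow). -/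
noncomputable def qBracket (q ν : ℝ) : ℝ := (1 - q ^ ν) / (1 - q)

/-- The second Jackson q-Bessel function in the notation
`J_ν^{(2)}(λx | q²) = J_ν^{(2)}(2λx(1−q); q²)`. -/
noncomputable def J2 (q ν lam x : ℝ) : ℝ :=
  (qPochInf (q ^ (2 * ν + 2)) (q ^ 2) / qPochInf (q ^ 2) (q ^ 2)) *
    ∑' n : ℕ, ((-1 : ℝ) ^ n * q ^ (2 * (n : ℝ) * ((n : ℝ) + ν)) *
        (lam * x * (1 - q)) ^ (2 * (n : ℝ) + ν)) /
      (qPoch (q ^ 2) (q ^ 2) n *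
        ∏ j ∈ Finset.range n, (1 - q ^ (2 * ν + 2 + 2 * (j : ℝ))))

/-!
Write `b = λx(1-q)`. Up to the constant `(q^{2ν+2};q²)_∞ / (q²;q²)_∞`, `J_ν^{(2)}(λx | q²)` is
`b^ν Σ cₙ b^{2n}`, and the coefficients for `ν` and `ν + 1` are tied by two contiguity relations.
Summed, these give the q-shift formulas
`(1 + b²) J_ν(qx) = q^ν (J_ν(x) + b J_{ν+1}(x))` and
`(1 + b²) q^{ν+1} J_{ν+1}(qx) = J_{ν+1}(x) - b J_ν(x)`.
Together with `(-b²; q²)_∞ = (1 + b²) (-q²b²; q²)_∞` they express `G(qx)` through `J_ν(x)` and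
`J_{ν+1}(x)`; in `G(x) - G(qx)` the `J_{ν+1}` terms then cancel.
-/

open Filter Topology

lemma multipliable_one_sub_mul_pow {s : ℝ} (hs : |s| < 1) (z : ℝ) :
    Multipliable fun k : ℕ => 1 - z * s ^ k := by
  simp_rw [sub_eq_add_neg]
  refine multipliable_one_add_of_summable ?_
  simpa [abs_mul, abs_pow] using (summable_geometric_of_lt_one (abs_nonneg s) hs).mul_left |z|

lemma qPochInf_eq_one_sub_mul {s : ℝ} (hs : |s| < 1) (z : ℝ) :
    qPochInf z s = (1 - z) * qPochInf (z * s) s := by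
  have hshift : ∀ k : ℕ, 1 - z * s ^ (k + 1) = 1 - z * s * s ^ k := fun k => by ring
  rw [qPochInf, tprod_eq_zero_mul' (by simpa only [hshift] using multipliable_one_sub_mul_pow hs _)]
  simp only [hshift, pow_zero, mul_one, qPochInf]

/-- With `s = q²` and `w = q^{2ν+2}`, `besselCoeff s w n` is the coefficient
`(-1)^n q^{2n(n+ν)} / ((q²;q²)_n (q^{2ν+2};q²)_n)` of the series defining `J_ν^{(2)}`, given here
through the ratio of consecutive coefficients. -/
noncomputable def besselCoeff (s w : ℝ) : ℕ → ℝ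
  | 0 => 1
  | n + 1 => -(w * s ^ (2 * n)) / ((1 - s ^ (n + 1)) * (1 - w * s ^ n)) * besselCoeff s w n

noncomputable def besselSeries (s w y : ℝ) : ℝ := ∑' n, besselCoeff s w n * y ^ n

lemma summable_besselCoeff_mul_pow {s : ℝ} (hs : |s| < 1) (w y : ℝ) :
    Summable fun n => besselCoeff s w n * y ^ n := by
  set ratio : ℝ → ℝ := fun t => -(w * t ^ 2) / ((1 - s * t) * (1 - w * t))
  have hratio : Tendsto (fun n : ℕ => ratio (s ^ n)) atTop (𝓝 0) := by
    have hcont : ContinuousAt ratio 0 := by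
      refine ContinuousAt.div (by fun_prop) (by fun_prop) (by simp)
    have hzero : ratio 0 = 0 := by simp [ratio]
    exact hzero ▸ hcont.tendsto.comp (tendsto_pow_atTop_nhds_zero_of_abs_lt_one hs)
  have hsmall : ∀ᶠ n : ℕ in atTop, ‖ratio (s ^ n)‖ * ‖y‖ ≤ 1 / 2 := by
    have hlim := hratio.norm.mul_const ‖y‖
    simp only [norm_zero, zero_mul] at hlim
    exact hlim.eventually (eventually_le_nhds (by norm_num))
  refine summable_of_ratio_norm_eventually_le (r := 1 / 2) (by norm_num) ?_
  filter_upwards [hsmall] with n hn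
  have hstep : besselCoeff s w (n + 1) * y ^ (n + 1)
      = ratio (s ^ n) * y * (besselCoeff s w n * y ^ n) := by
    simp only [besselCoeff, ratio]
    ring
  rw [hstep, norm_mul, norm_mul]
  exact mul_le_mul_of_nonneg_right hn (norm_nonneg _)

lemma mul_pow_lt_one_of_lt_one {w s : ℝ} (hw : w < 1) (hs0 : 0 ≤ s) (hs1 : s ≤ 1) (n : ℕ) :
    w * s ^ n < 1 := by
  rcases le_or_gt w 0 with hw0 | hw0
  · nlinarith [pow_nonneg hs0 n]
  · nlinarith [pow_le_one₀ hs0 hs1 (n := n)]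

section besselCoeff
variable {s w : ℝ} (hs0 : 0 ≤ s) (hs1 : s < 1) (hw : w < 1)
include hs0 hs1 hw

lemma one_sub_mul_besselCoeff (n : ℕ) :
    (1 - w) * s ^ n * besselCoeff s w n = (1 - w * s ^ n) * besselCoeff s (w * s) n := by
  induction n with
  | zero => simp [besselCoeff]
  | succ n ih =>
    have h1 : 1 - s ^ (n + 1) ≠ 0 := (sub_pos.2 (pow_lt_one₀ hs0 hs1 n.succ_ne_zero)).ne'
    have h2 : 1 - w * s ^ n ≠ 0 := (sub_pos.2 (mul_pow_lt_one_of_lt_one hw hs0 hs1.le n)).ne'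
    have h3 : 1 - w * s ^ (n + 1) ≠ 0 :=
      (sub_pos.2 (mul_pow_lt_one_of_lt_one hw hs0 hs1.le _)).ne'
    simp only [besselCoeff]
    rw [show w * s * s ^ n = w * s ^ (n + 1) by ring]
    field_simp
    linear_combination -(w * s * s ^ (2 * n)) * ih

lemma mul_pow_mul_besselCoeff (n : ℕ) :
    w * s ^ n * besselCoeff s (w * s) n
      = -((1 - w) * (1 - s ^ (n + 1)) * besselCoeff s w (n + 1)) := by
  have h1 : 1 - s ^ (n + 1) ≠ 0 := (sub_pos.2 (pow_lt_one₀ hs0 hs1 n.succ_ne_zero)).ne'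
  have h2 : 1 - w * s ^ n ≠ 0 := (sub_pos.2 (mul_pow_lt_one_of_lt_one hw hs0 hs1.le n)).ne'
  have h := one_sub_mul_besselCoeff hs0 hs1 hw n
  simp only [besselCoeff]
  field_simp
  linear_combination -(w * s ^ n) * h

lemma besselSeries_sub_mul_besselSeries (y : ℝ) :
    besselSeries s (w * s) y - w * besselSeries s (w * s) (s * y)
      = (1 - w) * besselSeries s w (s * y) := by
  have hs : |s| < 1 := abs_lt.2 ⟨by linarith, hs1⟩
  simp only [besselSeries]
  rw [← tsum_mul_left, ← tsum_mul_left, ← (summable_besselCoeff_mul_pow hs _ y).tsum_sub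
    ((summable_besselCoeff_mul_pow hs _ (s * y)).mul_left w)]
  refine tsum_congr fun n => ?_
  linear_combination (-y ^ n) * one_sub_mul_besselCoeff hs0 hs1 hw n

lemma mul_besselSeries_eq_sub (y : ℝ) :
    w * y * besselSeries s (w * s) (s * y)
      = (1 - w) * (besselSeries s w (s * y) - besselSeries s w y) := by
  have hs : |s| < 1 := abs_lt.2 ⟨by linarith, hs1⟩
  have htail (z : ℝ) :
      besselSeries s w z = 1 + ∑' n, besselCoeff s w (n + 1) * z ^ (n + 1) := by
    rw [besselSeries, (summable_besselCoeff_mul_pow hs w z).tsum_eq_zero_add]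
    simp [besselCoeff]
  have hsummable (z : ℝ) : Summable fun n => besselCoeff s w (n + 1) * z ^ (n + 1) :=
    (summable_nat_add_iff 1).2 (summable_besselCoeff_mul_pow hs w z)
  rw [htail, htail, add_sub_add_left_eq_sub, ← (hsummable _).tsum_sub (hsummable _), besselSeries,
    ← tsum_mul_left, ← tsum_mul_left]
  refine tsum_congr fun n => ?_
  linear_combination (y ^ (n + 1)) * mul_pow_mul_besselCoeff hs0 hs1 hw n

end besselCoeff

lemma mul_rpow_of_pos_left {a : ℝ} (ha : 0 < a) (b z : ℝ) : (a * b) ^ z = a ^ z * b ^ z := by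
  rcases le_or_gt 0 b with hb | hb
  · exact Real.mul_rpow ha.le hb
  · rw [Real.rpow_def_of_neg (mul_neg_of_pos_of_neg ha hb), Real.rpow_def_of_neg hb,
      Real.rpow_def_of_pos ha, Real.log_mul ha.ne' hb.ne, add_mul, Real.exp_add]
    ring

section J2
variable {q : ℝ} (hq : 0 < q)
include hq

lemma rpow_two_mul_add_two_eq (ν : ℝ) (n : ℕ) :
    q ^ (2 * ν + 2 + 2 * (n : ℝ)) = q ^ (2 * ν + 2) * (q ^ 2) ^ n := by
  rw [Real.rpow_add hq, ← pow_mul, ← Real.rpow_natCast]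
  push_cast
  ring_nf

lemma rpow_two_mul_add_one_add_two (ν : ℝ) :
    q ^ (2 * (ν + 1) + 2) = q ^ (2 * ν + 2) * q ^ 2 := by
  rw [show 2 * (ν + 1) + 2 = 2 * ν + 2 + 2 * ((1 : ℕ) : ℝ) by push_cast; ring,
    rpow_two_mul_add_two_eq hq, pow_one]

lemma J2_coeff_eq_besselCoeff (ν : ℝ) (n : ℕ) :
    (-1) ^ n * q ^ (2 * (n : ℝ) * ((n : ℝ) + ν)) /
        (qPoch (q ^ 2) (q ^ 2) n * ∏ j ∈ Finset.range n, (1 - q ^ (2 * ν + 2 + 2 * (j : ℝ))))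
      = besselCoeff (q ^ 2) (q ^ (2 * ν + 2)) n := by
  induction n with
  | zero => simp [qPoch, besselCoeff]
  | succ n ih =>
    have hpow : q ^ (2 * ((n + 1 : ℕ) : ℝ) * (((n + 1 : ℕ) : ℝ) + ν))
        = q ^ (2 * (n : ℝ) * ((n : ℝ) + ν)) * (q ^ (2 * ν + 2) * (q ^ 2) ^ (2 * n)) := by
      rw [← pow_mul, ← Real.rpow_natCast, ← Real.rpow_add hq, ← Real.rpow_add hq]
      push_cast
      ring_nf
    simp only [besselCoeff, ← ih, hpow, qPoch, Finset.prod_range_succ,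
      rpow_two_mul_add_two_eq hq, pow_succ' (q ^ 2) n]
    simp only [div_eq_mul_inv, mul_inv]
    ring

/-- For `λ < 0` the base `b = λx(1-q)` is negative and `b ^ ν = |b|^ν cos (νπ)`; the splitting
`b ^ (2n + ν) = b ^ ν * (b²)^n` still holds, so the sign of `λ` needs no case split. -/
lemma J2_eq_besselSeries (ν lam x : ℝ) (hb : lam * x * (1 - q) ≠ 0) :
    J2 q ν lam x = qPochInf (q ^ (2 * ν + 2)) (q ^ 2) / qPochInf (q ^ 2) (q ^ 2) *
      ((lam * x * (1 - q)) ^ ν *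
        besselSeries (q ^ 2) (q ^ (2 * ν + 2)) ((lam * x * (1 - q)) ^ 2)) := by
  rw [J2, besselSeries]
  congr 1
  rw [← tsum_mul_left]
  refine tsum_congr fun n => ?_
  have hsplit : (lam * x * (1 - q)) ^ (2 * (n : ℝ) + ν)
      = (lam * x * (1 - q)) ^ ν * ((lam * x * (1 - q)) ^ 2) ^ n := by
    rw [add_comm, show 2 * (n : ℝ) = ((2 * n : ℕ) : ℝ) by push_cast; ring,
      Real.rpow_add_natCast hb, pow_mul]
  rw [hsplit, ← J2_coeff_eq_besselCoeff hq]
  ring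

end J2

section qShift
variable {q ν lam x : ℝ} (hq : 0 < q) (hq1 : q < 1) (hν : -1 < ν) (hb : lam * x * (1 - q) ≠ 0)
include hq hq1 hν hb

lemma J2_q_mul :
    J2 q ν lam (q * x) = q ^ ν * (J2 q ν lam x + lam * x * (1 - q) * J2 q (ν + 1) lam x)
      / (1 + (lam * x * (1 - q)) ^ 2) := by
  have hbq : lam * (q * x) * (1 - q) = q * (lam * x * (1 - q)) := by ring
  have hw : q ^ (2 * ν + 2) < 1 := Real.rpow_lt_one hq.le hq1 (by linarith)
  have hs1 : q ^ 2 < 1 := by nlinarith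
  rw [eq_div_iff (by positivity), J2_eq_besselSeries hq _ _ _ (hbq ▸ mul_ne_zero hq.ne' hb), hbq,
    J2_eq_besselSeries hq _ _ _ hb, J2_eq_besselSeries hq _ _ _ hb, mul_rpow_of_pos_left hq,
    mul_pow, Real.rpow_add_one hb, rpow_two_mul_add_one_add_two hq,
    qPochInf_eq_one_sub_mul (by rwa [abs_of_nonneg (sq_nonneg q)]) (q ^ (2 * ν + 2))]
  have hA := besselSeries_sub_mul_besselSeries (by positivity) hs1 hw ((lam * x * (1 - q)) ^ 2)
  have hB := mul_besselSeries_eq_sub (by positivity) hs1 hw ((lam * x * (1 - q)) ^ 2)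
  linear_combination
    (-(qPochInf (q ^ (2 * ν + 2) * q ^ 2) (q ^ 2) / qPochInf (q ^ 2) (q ^ 2) * q ^ ν
      * (lam * x * (1 - q)) ^ ν)) * ((lam * x * (1 - q)) ^ 2 * hA + hB)

lemma J2_succ_q_mul :
    J2 q (ν + 1) lam (q * x) = (J2 q (ν + 1) lam x - lam * x * (1 - q) * J2 q ν lam x)
      / ((1 + (lam * x * (1 - q)) ^ 2) * q ^ (ν + 1)) := by
  have hbq : lam * (q * x) * (1 - q) = q * (lam * x * (1 - q)) := by ring
  have hw : q ^ (2 * ν + 2) < 1 := Real.rpow_lt_one hq.le hq1 (by linarith)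
  have hs1 : q ^ 2 < 1 := by nlinarith
  have hwsq : q ^ (2 * ν + 2) = (q ^ ν) ^ 2 * q ^ 2 := by
    rw [show 2 * ν + 2 = ν + ν + 2 by ring, Real.rpow_add hq, Real.rpow_add hq,
      show (2 : ℝ) = ((2 : ℕ) : ℝ) by norm_num, Real.rpow_natCast]
    ring
  rw [eq_div_iff (by positivity), J2_eq_besselSeries hq _ _ _ (hbq ▸ mul_ne_zero hq.ne' hb), hbq,
    J2_eq_besselSeries hq _ _ _ hb, J2_eq_besselSeries hq _ _ _ hb,
    rpow_two_mul_add_one_add_two hq, mul_rpow_of_pos_left hq, mul_pow, Real.rpow_add_one hb,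
    Real.rpow_add_one hq.ne',
    qPochInf_eq_one_sub_mul (by rwa [abs_of_nonneg (sq_nonneg q)]) (q ^ (2 * ν + 2))]
  have hA := besselSeries_sub_mul_besselSeries (by positivity) hs1 hw ((lam * x * (1 - q)) ^ 2)
  have hB := mul_besselSeries_eq_sub (by positivity) hs1 hw ((lam * x * (1 - q)) ^ 2)
  linear_combination
    (qPochInf (q ^ (2 * ν + 2) * q ^ 2) (q ^ 2) / qPochInf (q ^ 2) (q ^ 2)
      * (lam * x * (1 - q)) ^ ν * (lam * x * (1 - q)))
    * (-(1 + (lam * x * (1 - q)) ^ 2)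
        * besselSeries (q ^ 2) (q ^ (2 * ν + 2) * q ^ 2) (q ^ 2 * (lam * x * (1 - q)) ^ 2) * hwsq
      - hA + hB)

end qShift

theorem qIntegral_J2_power_general (q lam m ν : ℝ) (hq : 0 < q) (hq1 : q < 1)
    (hlam : lam ≠ 0) (hν : -1 < ν) :
    ∀ x : ℝ, 0 < x →
      qDeriv q
        (fun t => t ^ (m + 1) / qPochInf (-(t ^ 2 * lam ^ 2 * (1 - q) ^ 2)) (q ^ 2) *
          ((q ^ (-m) * qBracket q m - q ^ (-ν) * qBracket q ν) / t * J2 q ν lam t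
            + q ^ ν * lam * J2 q (ν + 1) lam t)) x
      = x ^ (m + 1) / qPochInf (-(x ^ 2 * lam ^ 2 * (1 - q) ^ 2)) (q ^ 2) *
          (q ^ m * lam ^ 2
            + (q ^ (-m) * (qBracket q m) ^ 2 - q ^ (-ν) * (qBracket q ν) ^ 2) / x ^ 2)
          * J2 q ν lam x := by
  intro x hx
  have hb : lam * x * (1 - q) ≠ 0 := mul_ne_zero (mul_ne_zero hlam hx.ne') (by linarith)
  have hP : qPochInf (-(x ^ 2 * lam ^ 2 * (1 - q) ^ 2)) (q ^ 2)
      = (1 + (lam * x * (1 - q)) ^ 2)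
        * qPochInf (-((q * x) ^ 2 * lam ^ 2 * (1 - q) ^ 2)) (q ^ 2) := by
    rw [qPochInf_eq_one_sub_mul (by rw [abs_of_nonneg (sq_nonneg q)]; nlinarith)]
    ring_nf
  rw [qDeriv, hP, J2_q_mul hq hq1 hν hb, J2_succ_q_mul hq hq1 hν hb, Real.mul_rpow hq.le hx.le,
    Real.rpow_add_one hq.ne', Real.rpow_add_one hx.ne', Real.rpow_add_one hq.ne',
    Real.rpow_neg hq.le, Real.rpow_neg hq.le, qBracket, qBracket]
  rcases eq_or_ne (qPochInf (-((q * x) ^ 2 * lam ^ 2 * (1 - q) ^ 2)) (q ^ 2)) 0 with hp | hp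
  · simp [hp] -- division by zero: both sides vanish
  have hqm := Real.rpow_pos_of_pos hq m
  have hqν := Real.rpow_pos_of_pos hq ν
  have h1q : 1 - q ≠ 0 := by linarith
  field_simp
  ring

/-- Indefinite q-integral for the second Jackson q-Bessel function. -/
theorem qIntegral_J2_power (q lam m ν : ℝ) (hq : 0 < q) (hq1 : q < 1)
    (hlam : lam ≠ 0) (hν : -1 < ν) (hmν : 0 < m + ν) :
    ∀ x : ℝ, 0 < x →
      qDeriv q
        (fun t => t ^ (m + 1) / qPochInf (-(t ^ 2 * lam ^ 2 * (1 - q) ^ 2)) (q ^ 2) *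
          ((q ^ (-m) * qBracket q m - q ^ (-ν) * qBracket q ν) / t * J2 q ν lam t
            + q ^ ν * lam * J2 q (ν + 1) lam t)) x
      = x ^ (m + 1) / qPochInf (-(x ^ 2 * lam ^ 2 * (1 - q) ^ 2)) (q ^ 2) *
          (q ^ m * lam ^ 2
            + (q ^ (-m) * (qBracket q m) ^ 2 - q ^ (-ν) * (qBracket q ν) ^ 2) / x ^ 2)
          * J2 q ν lam x :=
  qIntegral_J2_power_general q lam m ν hq hq1 hlam hν
end

section
/- Let 0 < q < 1 and let n be a positive integer. Then for all x ≠ 0, the q-derivative at x of the function G(x) := q^{−n}·x^{n−1}·( x·(D_{q⁻¹}AI(·;q))(x) − q·[n]_q·AI(x/q; q) ) equals x^{n+1}·( 1 − q^{1−n}·[n]_q·[n−1]_q / x³ )·AI(x; q); and the same identity holds with AI replaced by BI throughout. -/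
/-- The `q⁻¹`-derivative `(D_{q⁻¹} f)(x) = q (f(x/q) - f(x)) / ((1-q)x)`. -/
noncomputable def qInvDeriv (q : ℝ) (f : ℝ → ℝ) (x : ℝ) : ℝ :=
  q * (f (x / q) - f x) / ((1 - q) * x)

/-- The q-bracket `[n]_q = (1 - qⁿ)/(1 - q)`. -/
noncomputable def qBracketN (q : ℝ) (n : ℕ) : ℝ := (1 - q ^ n) / (1 - q)

/-- The q-Airy function `AI(x; q)`. -/
noncomputable def qAiryAI (q x : ℝ) : ℝ :=
  ∑' m : ℕ, q ^ (m * (3 * m + 1) / 2) * (1 - q) ^ (2 * m) * x ^ (3 * m) /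
    (qPoch (q ^ 3) (q ^ 3) m * qPoch (q ^ 2) (q ^ 3) m)

/-- The q-Airy function `BI(x; q)`. -/
noncomputable def qAiryBI (q x : ℝ) : ℝ :=
  ∑' m : ℕ, q ^ (3 * m * (m + 1) / 2) * (1 - q) ^ (2 * m) * x ^ (3 * m + 1) /
    (qPoch (q ^ 3) (q ^ 3) m * qPoch (q ^ 4) (q ^ 3) m)

/-!
Both `AI` and `BI` solve `(1/q) D_{q⁻¹} D_q y = x y`, i.e. the functional equation
`q y(x/q) + y(qx) - (1+q) y(x) = (1-q)² x³ y(x)`. The left side multiplies `x^k` by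
`q^(-k) (1-q^k)(q-q^k)`, which vanishes for `k ≤ 1`, so on a series `∑ aₘ x^(3m+r)` with `r ≤ 1`
the equation is a two-term recurrence for the coefficients; the `q`-Pochhammer denominators of
`AI` and `BI` satisfy it, and it forces geometric decay of the coefficients. The identity of the
theorem only involves `y` at `x/q`, `x`, `qx`; after eliminating `y(qx)` through the functional
equation it is an identity of rational functions in `q`, `x`, `qⁿ`.
-/

open Filter Topology

/-- `(1-q)² x² / q` times `(D_{q⁻¹} D_q y)(x)`. -/
noncomputable def qSecondDiff (q : ℝ) (y : ℝ → ℝ) (x : ℝ) : ℝ :=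
  q * y (x / q) + y (q * x) - (1 + q) * y x

section qSecondDiff

variable {q : ℝ}

lemma qSecondDiff_tsum {g : ℕ → ℝ → ℝ} {x : ℝ} (h₁ : Summable fun m => g m (x / q))
    (h₂ : Summable fun m => g m (q * x)) (h₃ : Summable fun m => g m x) :
    qSecondDiff q (fun x => ∑' m, g m x) x = ∑' m, qSecondDiff q (g m) x := by
  simp only [qSecondDiff]
  rw [(h₁.mul_left q |>.add h₂).tsum_sub (h₃.mul_left (1 + q)), (h₁.mul_left q).tsum_add h₂,
    tsum_mul_left, tsum_mul_left]

lemma pow_mul_qSecondDiff_const_mul_pow (hq : q ≠ 0) (c x : ℝ) (k : ℕ) :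
    q ^ k * qSecondDiff q (fun x => c * x ^ k) x = c * x ^ k * ((1 - q ^ k) * (q - q ^ k)) := by
  simp only [qSecondDiff, div_pow, mul_pow]
  field_simp
  ring

lemma qDeriv_qIntegral_of_qSecondDiff_eq (hq : q ≠ 0) (hq1 : q ≠ 1) {y : ℝ → ℝ} {x : ℝ}
    (hx : x ≠ 0) (hy : qSecondDiff q y x = (1 - q) ^ 2 * x ^ 3 * y x) {n : ℕ} (hn : 1 ≤ n) :
    qDeriv q (fun t => q ^ (-(n : ℤ)) * t ^ (n - 1) *
        (t * qInvDeriv q y t - q * qBracketN q n * y (t / q))) x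
      = x ^ (n + 1) * (1 - q ^ (1 - (n : ℤ)) * qBracketN q n * qBracketN q (n - 1) / x ^ 3) *
          y x := by
  obtain ⟨k, rfl⟩ : ∃ k, n = k + 1 := ⟨n - 1, by omega⟩
  have h1q : 1 - q ≠ 0 := sub_ne_zero.mpr hq1.symm
  have hyqx : y (q * x) = (1 - q) ^ 2 * x ^ 3 * y x + (1 + q) * y x - q * y (x / q) := by
    rw [qSecondDiff] at hy
    linarith
  rw [show (1 : ℤ) - (k + 1 : ℕ) = -(k : ℤ) by push_cast; ring]
  simp only [qDeriv, qInvDeriv, qBracketN, Nat.add_sub_cancel, zpow_neg, zpow_natCast,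
    mul_div_cancel_left₀ x hq, hyqx]
  field_simp
  ring

end qSecondDiff

/-- The recurrence that `qSecondDiff q y x = (1 - q) ^ 2 * x ^ 3 * y x` imposes on the
coefficients of `y x = ∑ aₘ x ^ (3m + r)`. -/
def QAiryRecurrence (q : ℝ) (r : ℕ) (a : ℕ → ℝ) : Prop :=
  ∀ m, (1 - q ^ (3 * m + 3 + r)) * (1 - q ^ (3 * m + 2 + r)) * a (m + 1)
    = q ^ (3 * m + 2 + r) * (1 - q) ^ 2 * a m

namespace QAiryRecurrence

variable {q : ℝ} {a : ℕ → ℝ} {r : ℕ}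

lemma abs_succ_le (hq : 0 < q) (hq1 : q < 1) (ha : QAiryRecurrence q r a) (m : ℕ) :
    |a (m + 1)| ≤ (q ^ 3) ^ m * |a m| := by
  have h1q : 0 < 1 - q := sub_pos.mpr hq1
  have hle : ∀ k ≠ 0, 1 - q ≤ 1 - q ^ k := fun k hk => by
    linarith [pow_le_of_le_one hq.le hq1.le hk]
  have hA := hle (3 * m + 3 + r) (by omega)
  have hB := hle (3 * m + 2 + r) (by omega)
  have hden : (1 - q) ^ 2 ≤ (1 - q ^ (3 * m + 3 + r)) * (1 - q ^ (3 * m + 2 + r)) := by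
    rw [sq]
    exact mul_le_mul hA hB h1q.le (h1q.le.trans hA)
  have hsucc : (1 - q) ^ 2 * |a (m + 1)| ≤ (1 - q) ^ 2 * (q ^ (3 * m + 2 + r) * |a m|) :=
    calc (1 - q) ^ 2 * |a (m + 1)|
        ≤ (1 - q ^ (3 * m + 3 + r)) * (1 - q ^ (3 * m + 2 + r)) * |a (m + 1)| := by gcongr
      _ = |q ^ (3 * m + 2 + r) * (1 - q) ^ 2 * a m| := by
        rw [← ha, abs_mul, abs_of_nonneg (mul_nonneg (h1q.le.trans hA) (h1q.le.trans hB))]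
      _ = (1 - q) ^ 2 * (q ^ (3 * m + 2 + r) * |a m|) := by
        rw [abs_mul, abs_mul, abs_of_nonneg (by positivity), abs_of_nonneg (by positivity)]
        ring
  calc |a (m + 1)| ≤ q ^ (3 * m + 2 + r) * |a m| := le_of_mul_le_mul_left hsucc (by positivity)
    _ ≤ (q ^ 3) ^ m * |a m| := by
      rw [← pow_mul]
      exact mul_le_mul_of_nonneg_right (pow_le_pow_of_le_one hq.le hq1.le (by omega))
        (abs_nonneg _)

lemma summable (hq : 0 < q) (hq1 : q < 1) (ha : QAiryRecurrence q r a) (x : ℝ) :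
    Summable fun m => a m * x ^ (3 * m + r) := by
  have hlim : Tendsto (fun m : ℕ => (q ^ 3) ^ m * |x| ^ 3) atTop (𝓝 0) := by
    simpa using (tendsto_pow_atTop_nhds_zero_of_lt_one (by positivity)
      (pow_lt_one₀ hq.le hq1 three_ne_zero)).mul_const (|x| ^ 3)
  refine summable_of_ratio_norm_eventually_le (r := 1 / 2) (by norm_num) ?_
  filter_upwards [hlim.eventually (ge_mem_nhds (by norm_num : (0 : ℝ) < 1 / 2))] with m hm
  calc ‖a (m + 1) * x ^ (3 * (m + 1) + r)‖ = |a (m + 1)| * |x| ^ 3 * |x| ^ (3 * m + r) := by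
        rw [norm_mul, Real.norm_eq_abs, Real.norm_eq_abs, abs_pow]
        ring
    _ ≤ (q ^ 3) ^ m * |a m| * |x| ^ 3 * |x| ^ (3 * m + r) := by
        gcongr
        exact ha.abs_succ_le hq hq1 m
    _ = (q ^ 3) ^ m * |x| ^ 3 * ‖a m * x ^ (3 * m + r)‖ := by
        rw [norm_mul, Real.norm_eq_abs, Real.norm_eq_abs, abs_pow]
        ring
    _ ≤ 1 / 2 * ‖a m * x ^ (3 * m + r)‖ := by gcongr

lemma qSecondDiff_tsum_eq (hq : 0 < q) (hq1 : q < 1) (hr : r ≤ 1) (ha : QAiryRecurrence q r a)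
    (x : ℝ) :
    qSecondDiff q (fun x => ∑' m, a m * x ^ (3 * m + r)) x
      = (1 - q) ^ 2 * x ^ 3 * ∑' m, a m * x ^ (3 * m + r) := by
  have hs := ha.summable hq hq1
  have hq0 : q ≠ 0 := hq.ne'
  have hzero : qSecondDiff q (fun x => a 0 * x ^ (3 * 0 + r)) x = 0 := by
    have h := pow_mul_qSecondDiff_const_mul_pow hq0 (a 0) x (3 * 0 + r)
    interval_cases r <;> simpa [hq0] using h
  have hsucc : ∀ m, qSecondDiff q (fun x => a (m + 1) * x ^ (3 * (m + 1) + r)) x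
      = (1 - q) ^ 2 * x ^ 3 * (a m * x ^ (3 * m + r)) := fun m => by
    refine mul_left_cancel₀ (pow_ne_zero (3 * (m + 1) + r) hq0) ?_
    rw [pow_mul_qSecondDiff_const_mul_pow hq0]
    linear_combination (q * x ^ (3 * m + 3 + r)) * ha m
  have hsum : Summable fun m => qSecondDiff q (fun x => a m * x ^ (3 * m + r)) x :=
    (((hs (x / q)).mul_left q).add (hs (q * x))).sub ((hs x).mul_left (1 + q))
  rw [qSecondDiff_tsum (g := fun m x => a m * x ^ (3 * m + r)) (hs _) (hs _) (hs _),
    hsum.tsum_eq_zero_add, hzero, zero_add, ← tsum_mul_left]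
  exact tsum_congr hsucc

end QAiryRecurrence

lemma qPoch_succ (z q : ℝ) (m : ℕ) : qPoch z q (m + 1) = qPoch z q m * (1 - z * q ^ m) :=
  Finset.prod_range_succ _ _

lemma qPoch_pow_pos {q : ℝ} (hq : 0 < q) (hq1 : q < 1) {a : ℕ} (ha : a ≠ 0) (b m : ℕ) :
    0 < qPoch (q ^ a) (q ^ b) m :=
  Finset.prod_pos fun k _ => by
    rw [← pow_mul, ← pow_add, sub_pos]
    exact pow_lt_one₀ hq.le hq1 (by omega)

/-- `AI` and `BI` are `∑ qAiryCoeff q r m * x ^ (3m + r)` for `r = 0` and `r = 1`. -/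
noncomputable def qAiryCoeff (q : ℝ) (r m : ℕ) : ℝ :=
  q ^ (m * (3 * m + 1 + 2 * r) / 2) * (1 - q) ^ (2 * m) /
    (qPoch (q ^ 3) (q ^ 3) m * qPoch (q ^ (2 + 2 * r)) (q ^ 3) m)

section qAiryCoeff

variable {q : ℝ}

lemma qAiryRecurrence_qAiryCoeff (hq : 0 < q) (hq1 : q < 1) {r : ℕ} (hr : r ≤ 1) :
    QAiryRecurrence q r (qAiryCoeff q r) := by
  intro m
  have hexp : (m + 1) * (3 * (m + 1) + 1 + 2 * r) / 2
      = m * (3 * m + 1 + 2 * r) / 2 + (3 * m + 2 + r) := by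
    rw [← Nat.add_mul_div_left _ _ two_pos]
    ring_nf
  have h3 := qPoch_pow_pos hq hq1 three_ne_zero 3 m
  have h2r := qPoch_pow_pos hq hq1 (a := 2 + 2 * r) (by omega) 3 m
  have hlt : ∀ j ≠ 0, 1 - q ^ j ≠ 0 := fun j hj =>
    (sub_pos.mpr (pow_lt_one₀ hq.le hq1 hj)).ne'
  have h3' := hlt (3 + 3 * m) (by omega)
  have h2r' := hlt (2 + 2 * r + 3 * m) (by omega)
  simp only [qAiryCoeff, qPoch_succ, hexp, ← pow_mul, ← pow_add]
  interval_cases r <;> (field_simp; ring)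

lemma qAiryAI_eq_tsum (x : ℝ) : qAiryAI q x = ∑' m, qAiryCoeff q 0 m * x ^ (3 * m + 0) :=
  tsum_congr fun m => by
    simp only [qAiryCoeff, mul_zero, add_zero]
    ring

lemma qAiryBI_eq_tsum (x : ℝ) : qAiryBI q x = ∑' m, qAiryCoeff q 1 m * x ^ (3 * m + 1) :=
  tsum_congr fun m => by
    rw [qAiryCoeff, show m * (3 * m + 1 + 2 * 1) = 3 * m * (m + 1) by ring]
    ring

lemma qSecondDiff_qAiryAI (hq : 0 < q) (hq1 : q < 1) (x : ℝ) :
    qSecondDiff q (qAiryAI q) x = (1 - q) ^ 2 * x ^ 3 * qAiryAI q x := by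
  rw [funext qAiryAI_eq_tsum]
  exact (qAiryRecurrence_qAiryCoeff hq hq1 zero_le_one).qSecondDiff_tsum_eq hq hq1
    zero_le_one x

lemma qSecondDiff_qAiryBI (hq : 0 < q) (hq1 : q < 1) (x : ℝ) :
    qSecondDiff q (qAiryBI q) x = (1 - q) ^ 2 * x ^ 3 * qAiryBI q x := by
  rw [funext qAiryBI_eq_tsum]
  exact (qAiryRecurrence_qAiryCoeff hq hq1 le_rfl).qSecondDiff_tsum_eq hq hq1 le_rfl x

end qAiryCoeff

/-- Indefinite q-integrals for the q-Airy functions `AI` and `BI`. -/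
theorem qIntegral_qAiry (q : ℝ) (hq : 0 < q) (hq1 : q < 1) (n : ℕ) (hn : 1 ≤ n) :
    (∀ x : ℝ, x ≠ 0 →
      qDeriv q
        (fun t => q ^ (-(n : ℤ)) * t ^ (n - 1) *
          (t * qInvDeriv q (fun s => qAiryAI q s) t
            - q * qBracketN q n * qAiryAI q (t / q))) x
      = x ^ (n + 1) *
          (1 - q ^ (1 - (n : ℤ)) * qBracketN q n * qBracketN q (n - 1) / x ^ 3) *
          qAiryAI q x)
    ∧ (∀ x : ℝ, x ≠ 0 →
      qDeriv q
        (fun t => q ^ (-(n : ℤ)) * t ^ (n - 1) *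
          (t * qInvDeriv q (fun s => qAiryBI q s) t
            - q * qBracketN q n * qAiryBI q (t / q))) x
      = x ^ (n + 1) *
          (1 - q ^ (1 - (n : ℤ)) * qBracketN q n * qBracketN q (n - 1) / x ^ 3) *
          qAiryBI q x) := by
  exact ⟨fun x hx => qDeriv_qIntegral_of_qSecondDiff_eq hq.ne' hq1.ne hx
      (qSecondDiff_qAiryAI hq hq1 x) hn,
    fun x hx => qDeriv_qIntegral_of_qSecondDiff_eq hq.ne' hq1.ne hx
      (qSecondDiff_qAiryBI hq hq1 x) hn⟩
end
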